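/- arXiv:1909.06316 — 3 statements merged into one kernel-verified Lean document; each statement's English description precedes it below -/
import Mathlib

section
/- Let V be a Hilbert space and H : V → V a bounded self-adjoint operator. Suppose λ is an isolated point of the spectrum of H, with Spec(H) ∩ (λ−δ, λ+δ) = {λ} for some δ > 0. Let P be the orthogonal projection onto ker(H−λ) and Q = I − P. Then (H−λ) restricted to the range of Q is invertible and ‖(H−λ)^{-1}Q‖ ≤ δ^{-1}. -/
/-!
Put `T = H - λ`. The gap says `σ(T) ⊆ {0} ∪ {|x| ≥ δ}`, so the continuous function `gapInv δ`,
which equals `x⁻¹` for `|x| ≥ δ`, vanishes at `0` and is bounded by `δ⁻¹`, turns into an operator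
`S = gapInv δ (T)` with `‖S‖ ≤ δ⁻¹` that commutes with `T` and satisfies `T S T = T`.
Both `S` and `T` are self-adjoint and commute with `T`, so they preserve `(ker T)ᗮ`, and on it
`S T - 1` and `T S - 1` take values in `ker T ∩ (ker T)ᗮ = 0`. Hence `S` inverts `T` on
`(ker T)ᗮ`, which gives both the bijectivity and `‖Q u‖ = ‖S T Q u‖ ≤ δ⁻¹ ‖T u‖`.
-/

open Set

noncomputable def gapInv (δ x : ℝ) : ℝ := x / max (x ^ 2) (δ ^ 2)

section gapInv

variable {δ : ℝ} (hδ : 0 < δ)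
include hδ

theorem continuous_gapInv : Continuous (gapInv δ) :=
  continuous_id.div (by fun_prop) fun _ ↦ (lt_max_of_lt_right (by positivity)).ne'

theorem gapInv_of_le_abs {x : ℝ} (hx : δ ≤ |x|) : gapInv δ x = x⁻¹ := by
  have hx2 : δ ^ 2 ≤ x ^ 2 := sq_abs x ▸ pow_le_pow_left₀ hδ.le hx 2
  have hx0 : x ≠ 0 := abs_pos.mp (hδ.trans_le hx)
  rw [gapInv, max_eq_left hx2, sq, div_mul_cancel_left₀ hx0]

theorem abs_gapInv_le (x : ℝ) : |gapInv δ x| ≤ δ⁻¹ := by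
  have hmax : 0 < max (x ^ 2) (δ ^ 2) := lt_max_of_lt_right (by positivity)
  rw [gapInv, abs_div, abs_of_pos hmax, div_le_iff₀ hmax, inv_mul_eq_div, le_div_iff₀ hδ]
  rcases le_total |x| δ with h | h
  · calc |x| * δ ≤ δ ^ 2 := by rw [sq]; gcongr
      _ ≤ _ := le_max_right _ _
  · calc |x| * δ ≤ x ^ 2 := by rw [← sq_abs, sq]; gcongr
      _ ≤ _ := le_max_left _ _

theorem mul_gapInv_mul_self {x : ℝ} (hx : x = 0 ∨ δ ≤ |x|) : x * gapInv δ x * x = x := by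
  rcases hx with rfl | hx
  · simp
  · rw [gapInv_of_le_abs hδ hx, mul_inv_cancel₀ (abs_pos.mp (hδ.trans_le hx)), one_mul]

end gapInv

section CStarAlgebra

variable {A : Type*} [CStarAlgebra A]

theorem eq_zero_or_le_abs_of_mem_spectrum_sub {a : A} {lam δ : ℝ}
    (h : spectrum ℂ a ∩ Metric.ball (lam : ℂ) δ ⊆ {(lam : ℂ)}) {x : ℝ}
    (hx : x ∈ spectrum ℝ (a - (lam : ℂ) • 1)) : x = 0 ∨ δ ≤ |x| := by
  rw [or_iff_not_imp_right, not_le]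
  intro hxδ
  rw [← spectrum.preimage_algebraMap ℂ, mem_preimage, ← Algebra.algebraMap_eq_smul_one,
    ← spectrum.sub_singleton_eq] at hx
  obtain ⟨z, hz, _, rfl, hzx⟩ := hx
  replace hzx : z - lam = x := hzx
  have hzball : z ∈ Metric.ball (lam : ℂ) δ := by
    rwa [Metric.mem_ball, dist_eq_norm, hzx, Complex.norm_real, Real.norm_eq_abs]
  have hzlam : z = lam := h ⟨hz, hzball⟩
  exact_mod_cast hzx.symm.trans (sub_eq_zero.mpr hzlam)

theorem norm_cfc_gapInv_le {δ : ℝ} (hδ : 0 < δ) (a : A) : ‖cfc (gapInv δ) a‖ ≤ δ⁻¹ :=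
  norm_cfc_le (by positivity) fun x _ ↦ abs_gapInv_le hδ x

theorem mul_cfc_gapInv_mul_self {a : A} (ha : IsSelfAdjoint a) {δ : ℝ} (hδ : 0 < δ)
    (hgap : ∀ x ∈ spectrum ℝ a, x = 0 ∨ δ ≤ |x|) : a * cfc (gapInv δ) a * a = a := by
  have hcont := (continuous_gapInv hδ).continuousOn (s := spectrum ℝ a)
  calc a * cfc (gapInv δ) a * a = cfc (fun x ↦ x * gapInv δ x * x) a := by
        rw [cfc_mul _ _ a (by fun_prop), cfc_mul _ _ a, cfc_id' ℝ a]
    _ = cfc id a := cfc_congr fun x hx ↦ mul_gapInv_mul_self hδ (hgap x hx)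
    _ = a := cfc_id ℝ a

end CStarAlgebra

namespace ContinuousLinearMap

variable {𝕜 V : Type*} [RCLike 𝕜] [NormedAddCommGroup V] [InnerProductSpace 𝕜 V]
  {T S : V →L[𝕜] V}

theorem eq_of_apply_eq_of_mem_orthogonal_ker {v w : V} (hv : v ∈ T.kerᗮ) (hw : w ∈ T.kerᗮ)
    (h : T v = T w) : v = w := by
  have hker : v - w ∈ T.ker := by
    rw [LinearMap.mem_ker, coe_coe, map_sub, h, sub_self]
  rw [← sub_eq_zero, ← Submodule.mem_bot 𝕜, ← Submodule.inf_orthogonal_eq_bot T.ker]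
  exact ⟨hker, sub_mem hv hw⟩

variable [CompleteSpace V]

theorem mapsTo_orthogonal_ker_of_commute (hS : IsSelfAdjoint S) (hTS : Commute T S) :
    MapsTo S T.kerᗮ T.kerᗮ := by
  intro v hv
  rw [SetLike.mem_coe, Submodule.mem_orthogonal]
  intro k (hk : T k = 0)
  have hSk : T (S k) = 0 := by simpa [hk] using congr($hTS.eq k)
  have hSsymm : inner 𝕜 (S k) v = inner 𝕜 k (S v) := hS.isSymmetric k v
  rw [← hSsymm]
  exact Submodule.inner_right_of_mem_orthogonal hSk hv

section GeneralizedInverse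

variable (hT : IsSelfAdjoint T) (hS : IsSelfAdjoint S) (hTS : Commute T S)
  (hTST : T * S * T = T)
include hT hS hTS hTST

theorem invOn_orthogonal_ker : InvOn S T T.kerᗮ T.kerᗮ := by
  have hTK := mapsTo_orthogonal_ker_of_commute hT (Commute.refl T)
  have hSK := mapsTo_orthogonal_ker_of_commute hS hTS
  have hTTS : T * (T * S) = T := by rw [hTS.eq, ← mul_assoc, hTST]
  refine ⟨fun v hv ↦ ?_, fun w hw ↦ ?_⟩
  · exact eq_of_apply_eq_of_mem_orthogonal_ker (hSK (hTK hv)) hv congr($hTST v)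
  · exact eq_of_apply_eq_of_mem_orthogonal_ker (hTK (hSK hw)) hw congr($hTTS w)

theorem bijOn_orthogonal_ker : BijOn T T.kerᗮ T.kerᗮ :=
  (invOn_orthogonal_ker hT hS hTS hTST).bijOn
    (mapsTo_orthogonal_ker_of_commute hT (.refl T)) (mapsTo_orthogonal_ker_of_commute hS hTS)

theorem norm_le_mul_norm_apply_of_mem_orthogonal_ker {v : V} (hv : v ∈ T.kerᗮ) :
    ‖v‖ ≤ ‖S‖ * ‖T v‖ :=
  calc ‖v‖ = ‖S (T v)‖ := by rw [(invOn_orthogonal_ker hT hS hTS hTST).1 hv]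
    _ ≤ ‖S‖ * ‖T v‖ := S.le_opNorm (T v)

end GeneralizedInverse

end ContinuousLinearMap

theorem isolated_spectral_point_inverse_bound
    {V : Type*} [NormedAddCommGroup V] [InnerProductSpace ℂ V] [CompleteSpace V]
    (H : V →L[ℂ] V) (hH : IsSelfAdjoint H) (lam δ : ℝ) (hδ : 0 < δ)
    (hiso : spectrum ℂ H ∩ Metric.ball (lam : ℂ) δ = {(lam : ℂ)})
    (K : Submodule ℂ V) (hK : K = LinearMap.ker ((H - (lam : ℂ) • (1 : V →L[ℂ] V) : V →L[ℂ] V) : V →ₗ[ℂ] V))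
    (P : V →L[ℂ] V) (hP : ∀ u : V, P u ∈ K ∧ u - P u ∈ Kᗮ) :
    (∀ u : V, ‖u - P u‖ ≤ δ⁻¹ * ‖H u - (lam : ℂ) • u‖) ∧
      Set.BijOn (fun u : V => H u - (lam : ℂ) • u) (Kᗮ : Set V) (Kᗮ : Set V) := by
  set T : V →L[ℂ] V := H - (lam : ℂ) • (1 : V →L[ℂ] V)
  have hT : IsSelfAdjoint T := hH.sub <| .smul (Complex.conj_ofReal lam) (.one _)
  set S := cfc (gapInv δ) T
  have hS : IsSelfAdjoint S := cfc_predicate _ T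
  have hTS : Commute T S := ((Commute.refl T).cfc_real _).symm
  have hTST : T * S * T = T :=
    mul_cfc_gapInv_mul_self hT hδ fun _ ↦ eq_zero_or_le_abs_of_mem_spectrum_sub hiso.subset
  subst hK
  refine ⟨fun u ↦ ?_, ContinuousLinearMap.bijOn_orthogonal_ker hT hS hTS hTST⟩
  obtain ⟨hPu, hQu⟩ := hP u
  have hTPu : T (P u) = 0 := hPu
  have hTQu : T (u - P u) = T u := by rw [map_sub, hTPu, sub_zero]
  calc ‖u - P u‖ ≤ ‖S‖ * ‖T (u - P u)‖ :=
        ContinuousLinearMap.norm_le_mul_norm_apply_of_mem_orthogonal_ker hT hS hTS hTST hQu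
    _ ≤ δ⁻¹ * ‖T u‖ := by rw [hTQu]; gcongr; exact norm_cfc_gapInv_le hδ T
end

section
/- Let V be a Hilbert space, ε > 0, C > 0 with C²ε² < 1, and u₁, …, u_N unit vectors in V. Let P be an orthogonal projection on V with ‖(I−P)u_k‖ ≤ Cε for all k and |⟨P u_k, P u_l⟩| ≤ C²ε² for all k ≠ l. Then the dimension of the range of P is at least min(N, ⌊(1 − C²ε²)/(C²ε²)⌋). -/
/-!
The vectors `P u_k` have squared norm at least `1 - C²ε²` (Pythagoras for `u_k = P u_k + (I - P) u_k`)
and pairwise inner products of size at most `C²ε²`. For `m ≤ (1 - C²ε²) / (C²ε²)` of them the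
off-diagonal row sums of their Gram matrix are at most `(m - 1) C²ε² < 1 - C²ε²`, so the Gram matrix
is strictly diagonally dominant, hence nonsingular by Gershgorin, and these `m` vectors are linearly
independent in the range of `P`.
-/

open Finset

section InnerProductSpace

variable {𝕜 E : Type*} [RCLike 𝕜] [NormedAddCommGroup E] [InnerProductSpace 𝕜 E]

/-- Gershgorin's theorem applied to the Gram matrix of `v`. -/
theorem linearIndependent_of_sum_norm_inner_lt {ι : Type*} [Fintype ι] [DecidableEq ι]
    {v : ι → E} (h : ∀ k, ∑ j ∈ univ.erase k, ‖(inner 𝕜 (v k) (v j) : 𝕜)‖ < ‖v k‖ ^ 2) :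
    LinearIndependent 𝕜 v :=
  Matrix.linearIndependent_of_det_gram_ne_zero <| det_ne_zero_of_sum_row_lt_diag fun k => by
    simpa [Matrix.gram, inner_self_eq_norm_sq_to_K] using h k

theorem IsStarProjection.norm_sq_eq_norm_sub_apply_sq_add_norm_apply_sq [CompleteSpace E]
    {P : E →L[𝕜] E} (hP : IsStarProjection P) (x : E) :
    ‖x‖ ^ 2 = ‖x - P x‖ ^ 2 + ‖P x‖ ^ 2 := by
  have hPP : P (P x) = P x := congr($(hP.isIdempotentElem) x)
  have hsymm : (inner 𝕜 (P x) (P x) : 𝕜) = inner 𝕜 x (P (P x)) :=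
    hP.isSelfAdjoint.isSymmetric x (P x)
  have horth : (inner 𝕜 (x - P x) (P x) : 𝕜) = 0 := by
    rw [inner_sub_left, hsymm, hPP, sub_self]
  simpa [sq] using norm_add_sq_eq_norm_sq_add_norm_sq_of_inner_eq_zero _ _ horth

theorem IsStarProjection.norm_sq_sub_sq_le_norm_apply_sq [CompleteSpace E] {P : E →L[𝕜] E}
    (hP : IsStarProjection P) {x : E} {r : ℝ} (hx : ‖x - P x‖ ≤ r) :
    ‖x‖ ^ 2 - r ^ 2 ≤ ‖P x‖ ^ 2 := by
  have hsq : ‖x - P x‖ ^ 2 ≤ r ^ 2 := pow_le_pow_left₀ (norm_nonneg _) hx 2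
  linarith [hP.norm_sq_eq_norm_sub_apply_sq_add_norm_apply_sq x]

end InnerProductSpace

theorem LinearIndependent.natCast_card_le_rank_of_forall_mem {R M ι : Type*} [Ring R]
    [Nontrivial R] [AddCommGroup M] [Module R M] [Fintype ι] {v : ι → M} {p : Submodule R M}
    (hv : LinearIndependent R v) (hp : ∀ i, v i ∈ p) :
    (Fintype.card ι : Cardinal) ≤ Module.rank R p := by
  have hv' : LinearIndependent R fun i => (⟨v i, hp i⟩ : p) := .of_comp p.subtype hv
  simpa using hv'.cardinal_lift_le_rank

theorem natCast_mul_lt_one_of_le_floor {δ : ℝ} {n : ℕ} (hn : 0 < n)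
    (h : n ≤ ⌊(1 - δ) / δ⌋₊) : n * δ < 1 := by
  have hone : 1 ≤ (1 - δ) / δ := (Nat.one_le_floor_iff _).mp (hn.trans_le h)
  have hδ : 0 < δ := by
    by_contra! hδ
    linarith [div_nonpos_of_nonneg_of_nonpos (by linarith : 0 ≤ 1 - δ) hδ]
  have hn : (n : ℝ) ≤ (1 - δ) / δ := (Nat.le_floor_iff (by linarith)).mp h
  rw [le_div_iff₀ hδ] at hn
  linarith

theorem projection_rank_lower_bound_general
    {V : Type*} [NormedAddCommGroup V] [InnerProductSpace ℂ V] [CompleteSpace V]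
    (N : ℕ) (ε C : ℝ)
    (u : Fin N → V) (hu : ∀ k, ‖u k‖ = 1)
    (P : V →L[ℂ] V) (hPidem : P ∘L P = P) (hPsa : IsSelfAdjoint P)
    (hQ : ∀ k, ‖u k - P (u k)‖ ≤ C * ε)
    (hortho : ∀ k l, k ≠ l → ‖(inner ℂ (P (u k)) (P (u l)) : ℂ)‖ ≤ C ^ 2 * ε ^ 2) :
    (↑(min N ⌊(1 - C ^ 2 * ε ^ 2) / (C ^ 2 * ε ^ 2)⌋₊) : Cardinal) ≤
      Module.rank ℂ (LinearMap.range (P : V →ₗ[ℂ] V)) := by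
  set δ := C ^ 2 * ε ^ 2
  set m := min N ⌊(1 - δ) / δ⌋₊
  let ι : Fin m → Fin N := Fin.castLE (min_le_left _ _)
  have hP : IsStarProjection P := ⟨hPidem, hPsa⟩
  have hw : LinearIndependent ℂ fun i => P (u (ι i)) := by
    refine linearIndependent_of_sum_norm_inner_lt fun k => ?_
    have hoff : ∑ j ∈ univ.erase k, ‖(inner ℂ (P (u (ι k))) (P (u (ι j))) : ℂ)‖ ≤
        #(univ.erase k) * δ := by
      rw [← nsmul_eq_mul]
      exact sum_le_card_nsmul _ _ _ fun j hj =>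
        hortho _ _ ((Fin.castLE_injective _).ne (ne_of_mem_erase hj).symm)
    have hdiag : 1 - δ ≤ ‖P (u (ι k))‖ ^ 2 := by
      simpa [hu, mul_pow] using hP.norm_sq_sub_sq_le_norm_apply_sq (hQ (ι k))
    have hmδ : ((#(univ.erase k) + 1 : ℕ) : ℝ) * δ < 1 := by
      rw [card_erase_add_one (mem_univ k), card_univ, Fintype.card_fin]
      exact natCast_mul_lt_one_of_le_floor k.pos (min_le_right _ _)
    push_cast at hmδ
    linarith
  simpa using hw.natCast_card_le_rank_of_forall_mem fun i => LinearMap.mem_range_self _ _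

theorem projection_rank_lower_bound
    {V : Type*} [NormedAddCommGroup V] [InnerProductSpace ℂ V] [CompleteSpace V]
    (N : ℕ) (ε C : ℝ) (hε : 0 < ε) (hC : 0 < C) (hCε : C ^ 2 * ε ^ 2 < 1)
    (u : Fin N → V) (hu : ∀ k, ‖u k‖ = 1)
    (P : V →L[ℂ] V) (hPidem : P ∘L P = P) (hPsa : IsSelfAdjoint P)
    (hQ : ∀ k, ‖u k - P (u k)‖ ≤ C * ε)
    (hortho : ∀ k l, k ≠ l → ‖(inner ℂ (P (u k)) (P (u l)) : ℂ)‖ ≤ C ^ 2 * ε ^ 2) :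
    (↑(min N ⌊(1 - C ^ 2 * ε ^ 2) / (C ^ 2 * ε ^ 2)⌋₊) : Cardinal) ≤
      Module.rank ℂ (LinearMap.range (P : V →ₗ[ℂ] V)) :=
  projection_rank_lower_bound_general N ε C u hu P hPidem hPsa hQ hortho
end

section
/- Let V be a Hilbert space, H a bounded self-adjoint operator, A a self-adjoint operator, and suppose on a spectral subspace: for the spectral projection E = E_H(J) of an interval J, E·i[A,H]·E ≥ C·E with C > 0 (strict Mourre estimate with no compact error). Then H has no eigenvalues in the interior of J. (Virial theorem: if Hu = λu with λ ∈ J and u ∈ dom conditions, then ⟨u, i[A,H]u⟩ = 0, contradicting ⟨u, i[A,H]u⟩ ≥ C‖u‖².) -/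
/-!
An eigenvector `u` of `H` with eigenvalue in `J` is fixed by `E`, so the Mourre estimate gives
`C‖u‖² ≤ Re⟪i[A,H]u, u⟫`. The right side vanishes by the virial identity
`⟪[A,H]u, u⟫ = λ⟪Au, u⟫ - ⟪Au, Hu⟫ = 0`, valid because `λ` is real and `H` is self-adjoint.
-/

open RCLike ContinuousLinearMap

section

variable {𝕜 V : Type*} [RCLike 𝕜] [NormedAddCommGroup V] [InnerProductSpace 𝕜 V] [CompleteSpace V]

local notation "⟪" x ", " y "⟫" => inner 𝕜 x y

theorem IsSelfAdjoint.inner_commutator_apply_eigenvector_eq_zero {H : V →L[𝕜] V}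
    (hH : IsSelfAdjoint H) (A : V →L[𝕜] V) {lam : ℝ} {u : V} (hu : H u = (lam : 𝕜) • u) :
    ⟪(A * H - H * A) u, u⟫ = 0 := by
  rw [sub_apply, mul_apply_eq_comp, mul_apply_eq_comp, inner_sub_left,
    ← adjoint_inner_right H, hH.adjoint_eq, hu, map_smul, inner_smul_left, inner_smul_right,
    conj_ofReal, sub_self]

theorem ContinuousLinearMap.IsPositive.mul_norm_sq_le_re_inner_of_apply_eq_self
    {E T : V →L[𝕜] V} {C : ℝ} (hpos : (E * T * E - (C : 𝕜) • E).IsPositive)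
    (hE : IsSelfAdjoint E) {u : V} (hu : E u = u) :
    C * ‖u‖ ^ 2 ≤ re ⟪T u, u⟫ := by
  have h := hpos.re_inner_nonneg_left u
  rw [sub_apply, mul_apply_eq_comp, mul_apply_eq_comp, hu, smul_apply, hu, inner_sub_left,
    ← adjoint_inner_right E, hE.adjoint_eq, hu, inner_smul_left, conj_ofReal,
    inner_self_eq_norm_sq_to_K, map_sub] at h
  rw [← ofReal_pow, ← ofReal_mul, ofReal_re] at h
  linarith

end

theorem strict_mourre_no_eigenvalues_general
    {V : Type*} [NormedAddCommGroup V] [InnerProductSpace ℂ V] [CompleteSpace V]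
    (H A E : V →L[ℂ] V) (hH : IsSelfAdjoint H)
    (J : Set ℝ)
    (hEsa : IsSelfAdjoint E)
    (hEspec : ∀ lam ∈ J, ∀ u : V, H u = (lam : ℂ) • u → E u = u)
    (C : ℝ) (hC : 0 < C)
    (hMourre : (E * (Complex.I • (A * H - H * A)) * E - (C : ℂ) • E).IsPositive) :
    ∀ lam ∈ interior J, ∀ u : V, H u = (lam : ℂ) • u → u = 0 := by
  intro lam hlam u hu
  have hlower := hMourre.mul_norm_sq_le_re_inner_of_apply_eq_self hEsa
    (hEspec lam (interior_subset hlam) u hu)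
  rw [smul_apply, inner_smul_left, hH.inner_commutator_apply_eigenvector_eq_zero A hu, mul_zero,
    map_zero] at hlower
  have hnorm : ‖u‖ ^ 2 = 0 := le_antisymm (nonpos_of_mul_nonpos_right hlower hC) (sq_nonneg _)
  simpa using hnorm

/-- Virial theorem / strict Mourre estimate: if the spectral projection `E` of `H` for an
interval `J` satisfies `E·i[A,H]·E ≥ C·E` with `C > 0`, then `H` has no eigenvalues in
the interior of `J`. -/
theorem strict_mourre_no_eigenvalues
    {V : Type*} [NormedAddCommGroup V] [InnerProductSpace ℂ V] [CompleteSpace V]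
    (H A E : V →L[ℂ] V) (hH : IsSelfAdjoint H) (hA : IsSelfAdjoint A)
    (J : Set ℝ)
    (hEidem : E * E = E) (hEsa : IsSelfAdjoint E) (hEH : E * H = H * E)
    (hEspec : ∀ lam ∈ J, ∀ u : V, H u = (lam : ℂ) • u → E u = u)
    (C : ℝ) (hC : 0 < C)
    (hMourre : (E * (Complex.I • (A * H - H * A)) * E - (C : ℂ) • E).IsPositive) :
    ∀ lam ∈ interior J, ∀ u : V, H u = (lam : ℂ) • u → u = 0 :=
  strict_mourre_no_eigenvalues_general H A E hH J hEsa hEspec C hC hMourre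
end
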